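/- arXiv:2604.21059 — 2 statements merged into one kernel-verified Lean document; each statement's English description precedes it below -/
import Mathlib

section
/- Let G be a free product of cyclic groups and let g be represented by a cyclically reduced, non-self-overlapping reduced word of length at least 2. For every cyclically reduced word w of length at most |g| representing an element h, either w is a cyclic conjugate of the reduced word of g or of g^{-1}, or the homogenized Brooks quasimorphism satisfies φ̄_g(h) = 0. -/
open Monoid

variable {ι : Type*} [DecidableEq ι] {M : ι → Type*} [∀ i, Group (M i)]
  [∀ i, DecidableEq (M i)] [∀ i, IsCyclic (M i)]

/-- The reduced word (as a list of letters) representing an element of a free product. -/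
noncomputable def wordOf (g : CoprodI M) : List (Σ i, M i) :=
  (CoprodI.Word.equiv g).toList

/-- The number of occurrences of `w` as a (contiguous) subword of `l`. -/
def countOcc (w l : List (Σ i, M i)) : ℕ :=
  ((List.range (l.length + 1)).filter fun k => decide ((l.drop k).take w.length = w)).length

/-- The Brooks counting function `φ_g(h) = C_g(h) - C_{g⁻¹}(h)`. -/
noncomputable def brooks (g h : CoprodI M) : ℤ :=
  (countOcc (wordOf g) (wordOf h) : ℤ) - (countOcc (wordOf g⁻¹) (wordOf h) : ℤ)

/-- A reduced word is cyclically reduced if (when it has length at least two) its first and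
last letters lie in different factors. -/
def CyclicallyReduced (l : List (Σ i, M i)) : Prop :=
  2 ≤ l.length → ∀ x ∈ l.head?, ∀ y ∈ l.getLast?, x.1 ≠ y.1

/-- A word is self-overlapping if it can be written as `v ++ u ++ v` with `v` nontrivial. -/
def SelfOverlapping (l : List (Σ i, M i)) : Prop :=
  ∃ v u : List (Σ i, M i), v ≠ [] ∧ l = v ++ u ++ v

/-!
For `|h| ≥ 2`, cyclic reducedness makes the reduced word of `h ^ n` the `n`-fold concatenation
of the word `w` of `h`, so an occurrence of the word of `g` in it reads `w` cyclically from
some offset. If `|w| = |g|` the occurrence is a rotation of `w`. If `|w| < |g|`, some multiple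
`q` of `|w|` with `|g| ≤ 2q < 2|g|` is a period of the word of `g`, which therefore begins and
ends with the same block of length `|g| - q`: it is self-overlapping. The same applies to
`g⁻¹`, whose word is the formal inverse of that of `g`, so both counts in `φ_g(h ^ n)` vanish
for every `n`. For `|h| ≤ 1` the powers of `h` have words too short to contain that of `g`.
-/

namespace List

variable {α : Type*}

theorem getElem?_flatten_replicate {w : List α} {n j : ℕ} (hj : j < n * w.length) :
    (replicate n w).flatten[j]? = w[j % w.length]? := by
  induction n generalizing j with
  | zero => simp at hj
  | succ n ih =>
    rw [replicate_succ, flatten_cons, getElem?_append]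
    split_ifs with hjw
    · rw [Nat.mod_eq_of_lt hjw]
    · rw [Nat.succ_mul] at hj
      rw [ih (by omega), ← Nat.mod_eq_sub_mod (by omega)]

theorem exists_getElem?_eq_of_isInfix_flatten_replicate {l w : List α} {n : ℕ}
    (h : l <:+: (replicate n w).flatten) :
    ∃ k, ∀ i < l.length, l[i]? = w[(i + k) % w.length]? := by
  obtain ⟨k, hk, hget⟩ := infix_iff_getElem?.1 h
  refine ⟨k, fun i hi => ?_⟩
  simp only [length_flatten, map_replicate, sum_replicate, smul_eq_mul] at hk
  rw [getElem?_eq_getElem hi, ← hget i hi, getElem?_flatten_replicate (by omega)]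

theorem exists_eq_append_append_of_period {l : List α} {q : ℕ} (hq : q < l.length)
    (hq2 : l.length ≤ 2 * q) (hper : ∀ i, i + q < l.length → l[i]? = l[i + q]?) :
    ∃ v u, v ≠ [] ∧ l = v ++ u ++ v := by
  have hborder : l.drop q = l.take (l.length - q) := by
    refine ext_getElem? fun i => ?_
    rw [getElem?_drop, getElem?_take]
    split_ifs with hi
    · rw [hper i (by omega), Nat.add_comm]
    · exact getElem?_eq_none (by omega)
  refine ⟨l.take (l.length - q), (l.drop (l.length - q)).take (2 * q - l.length), ?_, ?_⟩
  · simp only [ne_eq, take_eq_nil_iff, not_or]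
    exact ⟨by omega, ne_nil_of_length_pos (by omega)⟩
  · calc l = l.take q ++ l.drop q := (take_append_drop q l).symm
      _ = _ := by
        rw [hborder, ← take_add, show l.length - q + (2 * q - l.length) = q by omega]

theorem isRotated_of_isInfix_flatten_replicate {l w : List α} {n : ℕ} (hl : l ≠ [])
    (hso : ¬ ∃ v u, v ≠ [] ∧ l = v ++ u ++ v) (hwl : w.length ≤ l.length)
    (h : l <:+: (replicate n w).flatten) : w ~r l := by
  obtain ⟨k, hk⟩ := exists_getElem?_eq_of_isInfix_flatten_replicate h
  rcases hwl.lt_or_eq with hlt | heq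
  · have hw : 0 < w.length := Nat.pos_of_ne_zero fun h0 => hl (by simpa [h0] using h.length_le)
    -- a multiple of `|w|` in `[|l| / 2, |l|)` is a period of `l`
    set q := w.length * ((l.length - 1) / w.length)
    have hq : q ≤ l.length - 1 := Nat.mul_div_le _ _
    have hq1 : w.length ≤ q :=
      Nat.le_mul_of_pos_right _ (Nat.div_pos (by omega) hw)
    have hq2 : l.length - 1 < q + w.length := by
      simpa [Nat.mul_succ] using Nat.lt_mul_div_succ (l.length - 1) hw
    refine absurd (exists_eq_append_append_of_period (q := q) (by omega) (by omega) ?_) hso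
    intro i hi
    rw [hk i (by omega), hk (i + q) hi, Nat.add_right_comm, Nat.add_mul_mod_self_left]
  · refine ⟨k, ext_getElem? fun i => ?_⟩
    by_cases hi : i < l.length
    · rw [getElem?_rotate (heq ▸ hi), hk i hi]
    · rw [getElem?_eq_none (by rw [length_rotate]; omega), getElem?_eq_none (by omega)]

end List

section FreeProduct

open CoprodI

variable {ι : Type*} {M : ι → Type*}

theorem SelfOverlapping.map_reverse {l : List (Σ i, M i)} (h : SelfOverlapping l)
    (f : (Σ i, M i) → Σ i, M i) : SelfOverlapping (l.map f).reverse := by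
  obtain ⟨v, u, hv, rfl⟩ := h
  exact ⟨(v.map f).reverse, (u.map f).reverse, by simpa using hv, by simp⟩

variable [DecidableEq ι] [∀ i, DecidableEq (M i)]

theorem countOcc_eq_zero_of_not_isInfix {w l : List (Σ i, M i)} (h : ¬ w <:+: l) :
    countOcc w l = 0 := by
  refine List.length_eq_zero_iff.2 (List.filter_eq_nil_iff.2 fun k _ hk => h ?_)
  rw [decide_eq_true_iff] at hk
  exact hk ▸ (List.take_prefix _ _).isInfix.trans (List.drop_suffix _ _).isInfix

variable [∀ i, Group (M i)]

theorem wordOf_prod (w : Word M) : wordOf w.prod = w.toList :=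
  congrArg Word.toList (Word.equiv.apply_symm_apply w)

theorem prod_wordOf (g : CoprodI M) : ((wordOf g).map fun l => of l.2).prod = g :=
  Word.equiv.symm_apply_apply g

theorem wordOf_eq_of_prod_eq {g : CoprodI M} {L : List (Σ i, M i)} (hne : ∀ l ∈ L, l.2 ≠ 1)
    (hchain : L.IsChain fun a b => a.1 ≠ b.1) (hprod : (L.map fun l => of l.2).prod = g) :
    wordOf g = L :=
  hprod ▸ wordOf_prod ⟨L, hne, hchain⟩

theorem wordOf_one : wordOf (1 : CoprodI M) = [] :=
  wordOf_eq_of_prod_eq (by simp) List.isChain_nil (by simp)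

theorem length_wordOf_of_le_one {i : ι} (m : M i) : (wordOf (of m)).length ≤ 1 := by
  by_cases hm : m = 1
  · simp [hm, wordOf_one]
  · rw [wordOf_eq_of_prod_eq (L := [⟨i, m⟩]) (by simpa) (List.isChain_singleton _) (by simp)]
    simp

theorem length_wordOf_pow_le_one {h : CoprodI M} (h1 : (wordOf h).length ≤ 1) (n : ℕ) :
    (wordOf (h ^ n)).length ≤ 1 := by
  match hh : wordOf h, h1 with
  | [], _ =>
    have : h = 1 := by simpa [hh] using (prod_wordOf h).symm
    simp [this, wordOf_one]
  | [⟨_, m⟩], _ =>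
    have : h = of m := by simpa [hh] using (prod_wordOf h).symm
    rw [this, ← map_pow]
    exact length_wordOf_of_le_one _

theorem wordOf_inv (g : CoprodI M) :
    wordOf g⁻¹ = ((wordOf g).map fun l => ⟨l.1, l.2⁻¹⟩).reverse := by
  refine wordOf_eq_of_prod_eq ?_ ?_ ?_
  · simp only [List.mem_reverse, List.mem_map]
    rintro _ ⟨l, hl, rfl⟩
    exact inv_ne_one.2 ((Word.equiv g).ne_one l hl)
  · rw [List.isChain_reverse, List.isChain_map]
    exact (Word.equiv g).chain_ne.imp fun _ _ => Ne.symm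
  · conv_rhs => rw [← prod_wordOf g]
    simp [List.prod_inv_reverse, Function.comp_def]

theorem length_wordOf_inv (g : CoprodI M) : (wordOf g⁻¹).length = (wordOf g).length := by
  simp [wordOf_inv]

theorem SelfOverlapping.of_wordOf_inv {g : CoprodI M} (h : SelfOverlapping (wordOf g⁻¹)) :
    SelfOverlapping (wordOf g) := by
  have := h.map_reverse fun l => ⟨l.1, l.2⁻¹⟩
  rwa [← wordOf_inv, inv_inv] at this

theorem wordOf_pow {h : CoprodI M} (h2 : 2 ≤ (wordOf h).length)
    (hcyc : CyclicallyReduced (wordOf h)) (n : ℕ) :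
    wordOf (h ^ n) = (List.replicate n (wordOf h)).flatten := by
  have hne : wordOf h ≠ [] := List.ne_nil_of_length_pos (by omega)
  refine wordOf_eq_of_prod_eq ?_ ?_ ?_
  · simp only [List.mem_flatten, List.mem_replicate]
    rintro l ⟨_, ⟨-, rfl⟩, hl⟩
    exact (Word.equiv h).ne_one l hl
  · rw [List.isChain_flatten (by simp [hne])]
    refine ⟨fun l hl => List.eq_of_mem_replicate hl ▸ (Word.equiv h).chain_ne,
      List.isChain_replicate_of_rel _ ?_⟩
    exact fun x hx y hy => (hcyc h2 y hy x hx).symm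
  · simp [List.map_flatten, List.prod_flatten, prod_wordOf]

theorem isRotated_of_isInfix_wordOf_pow {g h : CoprodI M} (hg : 2 ≤ (wordOf g).length)
    (hso : ¬ SelfOverlapping (wordOf g)) (hh : CyclicallyReduced (wordOf h))
    (hhg : (wordOf h).length ≤ (wordOf g).length) {n : ℕ}
    (hocc : wordOf g <:+: wordOf (h ^ n)) : wordOf h ~r wordOf g := by
  by_cases h2 : 2 ≤ (wordOf h).length
  · rw [wordOf_pow h2 hh] at hocc
    exact List.isRotated_of_isInfix_flatten_replicate (List.ne_nil_of_length_pos (by omega))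
      hso hhg hocc
  · have := length_wordOf_pow_le_one (h := h) (by omega) n
    have := hocc.length_le
    omega

theorem countOcc_wordOf_pow_eq_zero {g h : CoprodI M} (hg : 2 ≤ (wordOf g).length)
    (hso : ¬ SelfOverlapping (wordOf g)) (hh : CyclicallyReduced (wordOf h))
    (hhg : (wordOf h).length ≤ (wordOf g).length) (hrot : ¬ wordOf h ~r wordOf g) (n : ℕ) :
    countOcc (wordOf g) (wordOf (h ^ n)) = 0 :=
  countOcc_eq_zero_of_not_isInfix (mt (isRotated_of_isInfix_wordOf_pow hg hso hh hhg) hrot)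

end FreeProduct

theorem brooks_homogenization_vanishes_general (g : CoprodI M)
    (hlen : 2 ≤ (wordOf g).length)
    (hso : ¬ SelfOverlapping (wordOf g))
    (h : CoprodI M)
    (hw : CyclicallyReduced (wordOf h))
    (hwlen : (wordOf h).length ≤ (wordOf g).length) :
    (∃ n : ℕ, wordOf h = (wordOf g).rotate n ∨ wordOf h = (wordOf g⁻¹).rotate n) ∨
      Filter.Tendsto (fun n : ℕ => (brooks g (h ^ n) : ℝ) / (n : ℝ))
        Filter.atTop (nhds 0) := by
  refine or_iff_not_imp_left.2 fun hrot => ?_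
  have hnot_rot : ¬ wordOf h ~r wordOf g := fun hr =>
    let ⟨s, hs⟩ := hr.symm; hrot ⟨s, .inl hs.symm⟩
  have hnot_rot_inv : ¬ wordOf h ~r wordOf g⁻¹ := fun hr =>
    let ⟨s, hs⟩ := hr.symm; hrot ⟨s, .inr hs.symm⟩
  have hinv := length_wordOf_inv g
  have hzero (n : ℕ) : brooks g (h ^ n) = 0 := by
    rw [brooks, countOcc_wordOf_pow_eq_zero hlen hso hw hwlen hnot_rot n,
      countOcc_wordOf_pow_eq_zero (hinv ▸ hlen) (mt .of_wordOf_inv hso) hw (hinv ▸ hwlen)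
        hnot_rot_inv n]
    rfl
  simp [hzero]

/-- If `h` is represented by a cyclically reduced word of length at most `|g|`, then either
that word is a cyclic conjugate of the reduced word of `g` or of `g⁻¹`, or the homogenized
Brooks quasimorphism vanishes: `φ̄_g(h) = 0`. -/
theorem brooks_homogenization_vanishes (g : CoprodI M)
    (hlen : 2 ≤ (wordOf g).length)
    (hcyc : CyclicallyReduced (wordOf g))
    (hso : ¬ SelfOverlapping (wordOf g))
    (h : CoprodI M)
    (hw : CyclicallyReduced (wordOf h))
    (hwlen : (wordOf h).length ≤ (wordOf g).length) :
    (∃ n : ℕ, wordOf h = (wordOf g).rotate n ∨ wordOf h = (wordOf g⁻¹).rotate n) ∨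
      Filter.Tendsto (fun n : ℕ => (brooks g (h ^ n) : ℝ) / (n : ℝ))
        Filter.atTop (nhds 0) :=
  brooks_homogenization_vanishes_general g hlen hso h hw hwlen
end

section
/- In a free group (or free product of cyclic groups with lexicographic order on reduced words), every element g that is not a proper power is conjugate to an element g' whose reduced word representative is cyclically reduced and not self-overlapping. -/
open Monoid

variable {ι : Type*} [DecidableEq ι] {M : ι → Type*} [∀ i, Group (M i)]
  [∀ i, DecidableEq (M i)] [∀ i, IsCyclic (M i)]

/-!
Conjugate `g` to a cyclically reduced element (conjugating by the first letter shortens any word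
whose first and last letters lie in the same factor), then pass to the lexicographically least
cyclic rotation `w` of its reduced word; rotations of a cyclically reduced word are again reduced
and cyclically reduced, and their products are conjugate. If `w = v ++ u ++ v` with `v ≠ []`, the
rotations `u ++ v ++ v` and `v ++ v ++ u` are not smaller than `w`, which forces
`u ++ v = v ++ u`; then `u` and `v` are powers of a common word, so `w`, and hence `g`, is a
proper power.
-/

namespace List

variable {α : Type*}

theorem exists_eq_flatten_replicate_of_append_comm {u v : List α} (h : u ++ v = v ++ u) :
    ∃ (z : List α) (a b : ℕ), u = (replicate a z).flatten ∧ v = (replicate b z).flatten := by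
  induction hn : u.length + v.length using Nat.strong_induction_on generalizing u v with
  | _ n ih =>
  wlog huv : u.length ≤ v.length generalizing u v
  · obtain ⟨z, a, b, hu, hv⟩ := this h.symm (by omega) (by omega)
    exact ⟨z, b, a, hv, hu⟩
  rcases eq_or_ne u [] with rfl | hu
  · exact ⟨v, 0, 1, by simp, by simp⟩
  obtain ⟨w, rfl⟩ : u <+: v :=
    prefix_of_prefix_length_le (h ▸ prefix_append u v) (prefix_append v u) huv
  have hcomm : u ++ w = w ++ u := by simpa using h
  obtain ⟨z, a, b, rfl, rfl⟩ :=
    ih _ (by simpa [← hn] using length_pos_iff.2 hu) hcomm rfl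
  exact ⟨z, a, a + b, rfl, by rw [replicate_add, flatten_append]⟩

theorem Lex.append_of_length_eq {r : α → α → Prop} {a b : List α} (h : Lex r a b)
    (hab : a.length = b.length) (s t : List α) : Lex r (a ++ s) (b ++ t) := by
  induction h with
  | nil => simp at hab
  | rel h => exact .rel h
  | cons _ ih => exact .cons (ih (by simpa using hab))

theorem exists_eq_cons_append_singleton {l : List α} {x y : α} (hl : 2 ≤ l.length)
    (hx : x ∈ l.head?) (hy : y ∈ l.getLast?) : ∃ mid, l = x :: (mid ++ [y]) := by
  obtain ⟨t, rfl⟩ := head?_eq_some_iff.1 hx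
  obtain ⟨s, hs⟩ := getLast?_eq_some_iff.1 hy
  cases s with
  | nil => simp_all
  | cons a s =>
    obtain ⟨rfl, rfl⟩ := cons_eq_cons.1 hs
    exact ⟨s, rfl⟩

variable [LinearOrder α]

theorem append_comm_of_forall_isRotated_le {u v : List α}
    (hmin : ∀ w, w ~r v ++ u ++ v → v ++ u ++ v ≤ w) : u ++ v = v ++ u := by
  have h₁ : v ++ u ++ v ≤ u ++ v ++ v :=
    hmin _ (by simpa using (isRotated_append (l := v) (l' := u ++ v)).symm)
  have h₂ : v ++ u ++ v ≤ v ++ v ++ u :=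
    hmin _ (by simpa using (isRotated_append (l := v ++ u) (l' := v)).symm)
  refine le_antisymm (not_lt.1 fun hlt => h₂.not_gt ?_) (not_lt.1 fun hlt => h₁.not_gt ?_)
  · simpa using Lex.append_left _ hlt v
  · exact hlt.append_of_length_eq (by simp [Nat.add_comm]) v v

theorem exists_eq_flatten_replicate_of_forall_isRotated_le {u v : List α} (hv : v ≠ [])
    (hmin : ∀ w, w ~r v ++ u ++ v → v ++ u ++ v ≤ w) :
    ∃ (z : List α) (k : ℕ), 2 ≤ k ∧ v ++ u ++ v = (replicate k z).flatten := by
  obtain ⟨z, a, b, rfl, rfl⟩ :=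
    exists_eq_flatten_replicate_of_append_comm (append_comm_of_forall_isRotated_le hmin)
  have hb : b ≠ 0 := by rintro rfl; simp at hv
  refine ⟨z, b + a + b, by omega, ?_⟩
  simp only [replicate_add, flatten_append]

theorem exists_isRotated_forall_isRotated_le (l : List α) :
    ∃ w, w ~r l ∧ ∀ w', w' ~r l → w ≤ w' := by
  obtain ⟨w, hw, hmin⟩ := l.cyclicPermutations.toFinset.exists_min_image id
    ⟨l, by simpa using mem_cyclicPermutations_self l⟩
  simp only [mem_toFinset, mem_cyclicPermutations_iff, id] at hw hmin
  exact ⟨w, hw, hmin⟩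

end List

theorem isConj_prod_of_isRotated {G : Type*} [Group G] {l l' : List G} (h : l ~r l') :
    IsConj l.prod l'.prod := by
  obtain ⟨n, rfl⟩ := h
  rw [List.rotate_eq_drop_append_take_mod, List.prod_append]
  nth_rw 1 [← List.take_append_drop (n % l.length) l]
  rw [List.prod_append]
  exact isConj_iff.2 ⟨(l.take (n % l.length)).prod⁻¹, by group⟩

theorem IsConj.exists_eq_pow {G : Type*} [Group G] {a b : G} {k : ℕ} (h : IsConj a (b ^ k)) :
    ∃ c, a = c ^ k := by
  obtain ⟨c, hc⟩ := isConj_iff.1 h.symm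
  exact ⟨c * b * c⁻¹, by rw [conj_pow, hc]⟩

section FreeProduct

variable {ι : Type*} {M : ι → Type*}

theorem not_selfOverlapping_of_length_le_one {l : List (Σ i, M i)} (hl : l.length ≤ 1) :
    ¬ SelfOverlapping l := by
  rintro ⟨v, u, hv, rfl⟩
  have := List.length_pos_iff.2 hv
  simp only [List.length_append] at hl
  omega

theorem isChain_and_cyclicallyReduced_iff {l : List (Σ i, M i)} (hl : 2 ≤ l.length) :
    l.IsChain (fun a b => a.1 ≠ b.1) ∧ CyclicallyReduced l ↔
      Cycle.Chain (fun a b : Σ i, M i => a.1 ≠ b.1) l := by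
  obtain ⟨a, t, rfl⟩ := List.exists_cons_of_length_pos (by omega : 0 < l.length)
  rw [Cycle.chain_ne_nil _ (List.cons_ne_nil a t), List.isChain_cons_cons, and_comm]
  simp only [CyclicallyReduced, imp_iff_right hl, List.head?_cons,
    List.getLast?_eq_some_getLast (List.cons_ne_nil a t), Option.mem_def, Option.some.injEq,
    forall_eq', ne_comm]

variable [∀ i, Group (M i)]

noncomputable def listProd (l : List (Σ i, M i)) : CoprodI M :=
  (l.map fun x => CoprodI.of x.2).prod

theorem listProd_append (l l' : List (Σ i, M i)) :
    listProd (l ++ l') = listProd l * listProd l' := by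
  simp [listProd]

theorem listProd_flatten_replicate (k : ℕ) (z : List (Σ i, M i)) :
    listProd (List.replicate k z).flatten = listProd z ^ k := by
  simp [listProd, List.map_flatten, List.prod_flatten, List.map_replicate]

def IsReducedWord (l : List (Σ i, M i)) : Prop :=
  (∀ x ∈ l, x.2 ≠ 1) ∧ l.IsChain (fun a b => a.1 ≠ b.1)

theorem isReducedWord_and_cyclicallyReduced_of_isRotated {l l' : List (Σ i, M i)}
    (hl : IsReducedWord l) (hcr : CyclicallyReduced l) (h2 : 2 ≤ l.length) (h : l' ~r l) :
    IsReducedWord l' ∧ CyclicallyReduced l' := by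
  have h2' : 2 ≤ l'.length := h.perm.length_eq ▸ h2
  have hchain := (isChain_and_cyclicallyReduced_iff h2).1 ⟨hl.2, hcr⟩
  rw [← Cycle.coe_eq_coe.2 h] at hchain
  obtain ⟨hchain', hcr'⟩ := (isChain_and_cyclicallyReduced_iff h2').2 hchain
  exact ⟨⟨fun x hx => hl.1 x (h.mem_iff.1 hx), hchain'⟩, hcr'⟩

theorem IsReducedWord.infix {l l' : List (Σ i, M i)} (hl' : IsReducedWord l') (h : l <:+: l') :
    IsReducedWord l :=
  ⟨fun x hx => hl'.1 x (h.subset hx), hl'.2.infix h⟩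

variable [DecidableEq ι] [∀ i, DecidableEq (M i)]

theorem isReducedWord_wordOf (g : CoprodI M) : IsReducedWord (wordOf g) :=
  ⟨(CoprodI.Word.equiv g).ne_one, (CoprodI.Word.equiv g).chain_ne⟩

theorem listProd_wordOf (g : CoprodI M) : listProd (wordOf g) = g :=
  CoprodI.Word.equiv.symm_apply_apply g

theorem wordOf_listProd {l : List (Σ i, M i)} (hl : IsReducedWord l) : wordOf (listProd l) = l :=
  congrArg CoprodI.Word.toList (CoprodI.Word.equiv.apply_symm_apply ⟨l, hl.1, hl.2⟩)

theorem exists_isConj_length_wordOf_lt {g : CoprodI M} (hg : ¬ CyclicallyReduced (wordOf g)) :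
    ∃ g', IsConj g g' ∧ (wordOf g').length < (wordOf g).length := by
  simp only [CyclicallyReduced, not_forall, not_not, exists_prop] at hg
  obtain ⟨h2, ⟨i, a⟩, hx, ⟨j, b⟩, hy, rfl : i = j⟩ := hg
  obtain ⟨mid, hw⟩ := List.exists_eq_cons_append_singleton h2 hx hy
  have hred := isReducedWord_wordOf g
  rw [hw] at hred
  have hconj : IsConj g (listProd mid * CoprodI.of (b * a)) := by
    refine isConj_iff.2 ⟨(CoprodI.of a)⁻¹, ?_⟩
    rw [← listProd_wordOf g, hw, map_mul]
    simp only [listProd, List.map_cons, List.map_append, List.map_nil, List.prod_cons,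
      List.prod_append, List.prod_nil]
    group
  by_cases hba : b * a = 1
  · have hmid : IsReducedWord mid := hred.infix ⟨[⟨i, a⟩], [⟨i, b⟩], rfl⟩
    refine ⟨listProd mid, by simpa [hba] using hconj, ?_⟩
    simp [wordOf_listProd hmid, hw]
  · have hmerged : IsReducedWord (mid ++ [⟨i, b * a⟩]) := by
      refine ⟨?_, ?_⟩
      · simp only [List.mem_append, List.mem_singleton]
        rintro x (hx | rfl)
        exacts [hred.1 x (by simp [hx]), hba]
      · have := hred.2.tail
        rw [← List.isChain_map Sigma.fst] at this ⊢
        simpa using this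
    refine ⟨listProd (mid ++ [⟨i, b * a⟩]),
      by simpa [listProd_append, listProd] using hconj, ?_⟩
    simp [wordOf_listProd hmerged, hw]

theorem exists_isConj_cyclicallyReduced (g : CoprodI M) :
    ∃ g₀, IsConj g g₀ ∧ CyclicallyReduced (wordOf g₀) := by
  induction hn : (wordOf g).length using Nat.strong_induction_on generalizing g with
  | _ n ih =>
  by_cases hcr : CyclicallyReduced (wordOf g)
  · exact ⟨g, .refl g, hcr⟩
  obtain ⟨g', hconj, hlt⟩ := exists_isConj_length_wordOf_lt hcr
  obtain ⟨g₀, hconj', hcr₀⟩ := ih _ (hn ▸ hlt) g' rfl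
  exact ⟨g₀, hconj.trans hconj', hcr₀⟩

end FreeProduct

/-- Every element of a free product of cyclic groups that is not a proper power is conjugate
to an element whose reduced word is cyclically reduced and not self-overlapping. -/
theorem exists_conj_cyclically_reduced_not_selfOverlapping (g : CoprodI M)
    (hg : ¬ ∃ (k : ℕ) (h : CoprodI M), 2 ≤ k ∧ g = h ^ k) :
    ∃ g' : CoprodI M, IsConj g g' ∧ CyclicallyReduced (wordOf g') ∧
      ¬ SelfOverlapping (wordOf g') := by
  obtain ⟨g₀, hconj₀, hcr₀⟩ := exists_isConj_cyclicallyReduced g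
  by_cases hlen : (wordOf g₀).length ≤ 1
  · exact ⟨g₀, hconj₀, hcr₀, not_selfOverlapping_of_length_le_one hlen⟩
  -- any linear order on the letters will do
  let _ : LinearOrder (Σ i, M i) := IsWellOrder.linearOrder WellOrderingRel
  obtain ⟨w, hrot, hmin⟩ := List.exists_isRotated_forall_isRotated_le (wordOf g₀)
  obtain ⟨hred, hcr⟩ := isReducedWord_and_cyclicallyReduced_of_isRotated
    (isReducedWord_wordOf g₀) hcr₀ (by omega) hrot
  have hconj : IsConj g (listProd w) :=
    hconj₀.trans (listProd_wordOf g₀ ▸ isConj_prod_of_isRotated (hrot.symm.map _))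
  refine ⟨listProd w, hconj, ?_⟩
  rw [wordOf_listProd hred]
  refine ⟨hcr, ?_⟩
  rintro ⟨v, u, hv, rfl⟩
  obtain ⟨z, k, hk, hz⟩ := List.exists_eq_flatten_replicate_of_forall_isRotated_le hv
    fun w' hw' => hmin w' (hw'.trans hrot)
  rw [hz, listProd_flatten_replicate] at hconj
  obtain ⟨c, rfl⟩ := hconj.exists_eq_pow
  exact hg ⟨k, c, hk, rfl⟩
end
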